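/- (Part I of the proof of Theorem 2: Lyapunov decrement.) Fix k ≥ 1 and suppose 0 < s_k ≤ s_{k+1} and s_{k+1} ≤ 2/L̃_{k+1}. Suppose further that s_{k+1} satisfies the four-case bound: (i) if w_{k+1} ≤ 0 and r_{k+1} ≥ 0 then s_{k+1}·b_{k+1} ≤ 4·a_{k+1}; (ii) if w_{k+1} ≤ 0 and r_{k+1} < 0 then s_{k+1}·(A_k·b_{k+1} + θ_{k+1}·(−r_{k+1})) ≤ 4·A_k·a_{k+1}; (iii) if w_{k+1} > 0 and r_{k+1} ≥ 0 then s_{k+1}·b̃_{k+1} ≤ 4·ã_{k+1}; (iv) if w_{k+1} > 0 and r_{k+1} < 0 then s_{k+1}·(A_k·b̃_{k+1} + θ_{k+1}·(−r_{k+1})) ≤ 4·A_k·ã_{k+1}. Then V_{k+1} ≤ V_k. -/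

import Mathlib

open scoped RealInnerProductSpace

noncomputable section

/-- `θ_k = k/2`. -/
def thetaSeq (k : ℕ) : ℝ := (k : ℝ) / 2

/-- `c_k = θ_{k+1} / (θ_{k+1}² − θ_k²)`. -/
def cSeq (k : ℕ) : ℝ := thetaSeq (k + 1) / (thetaSeq (k + 1) ^ 2 - thetaSeq k ^ 2)

/-- `A_k = c_k · θ_k²`. -/
def ASeq (k : ℕ) : ℝ := cSeq k * thetaSeq k ^ 2

variable {H : Type*} [NormedAddCommGroup H] [InnerProductSpace ℝ H] [FiniteDimensional ℝ H]

/-- `G_k(Y) = (2θ_k h)^{−β} ∇F(Y) + L̃Y`. -/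
def Gmap (h β : ℝ) (F : H → ℝ) (L : H →L[ℝ] H) (k : ℕ) (Y : H) : H :=
  ((2 * thetaSeq k * h) ^ (-β)) • gradient F Y + L Y

/-- `L̃_k = 2·max{λ̄, (kh)^{−β}·L_f}`. -/
def LSmooth (lambar Lf h β : ℝ) (k : ℕ) : ℝ :=
  2 * max lambar (((k : ℝ) * h) ^ (-β) * Lf)

/-- Lyapunov function `V_k` (for `k ≥ 1`). -/
def VSeq (h β : ℝ) (F : H → ℝ) (L : H →L[ℝ] H) (Xs : H) (X Z : ℕ → H) (s : ℕ → ℝ)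
    (k : ℕ) : ℝ :=
  2 * ASeq k * (((2 * thetaSeq k * h) ^ (-β)) * (F (X k) - F Xs)
      + (1 / 2) * ⟪X k - Xs, L (X k - Xs)⟫
      - (s k / 4) * ‖Gmap h β F L k (X k)‖ ^ 2)
    + (1 / s k) * ‖Z (k + 1) - Xs‖ ^ 2

/-- `a_{k+1}` (indexed so that `aSeq … k = a_{k+1}`). -/
def aSeq (h β : ℝ) (F : H → ℝ) (L : H →L[ℝ] H) (Xs : H) (X : ℕ → H) (k : ℕ) : ℝ :=
  ((2 * thetaSeq k * h) ^ (-β)) * (F (X k) - F Xs)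
    + (1 / 2) * ⟪X k - Xs, L (X k - Xs)⟫
    - ((2 * thetaSeq (k + 1) * h) ^ (-β)) * (F (X (k + 1)) - F Xs)
    - (1 / 2) * ⟪X (k + 1) - Xs, L (X (k + 1) - Xs)⟫
    - ⟪Gmap h β F L (k + 1) (X (k + 1)), X k - X (k + 1)⟫

/-- `b_{k+1}` (indexed so that `bSeq … k = b_{k+1}`). -/
def bSeq (h β : ℝ) (F : H → ℝ) (L : H →L[ℝ] H) (X : ℕ → H) (k : ℕ) : ℝ :=
  ‖Gmap h β F L k (X k) - Gmap h β F L (k + 1) (X (k + 1))‖ ^ 2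

/-- `ã_{k+1}` (indexed so that `atilSeq … k = ã_{k+1}`). -/
def atilSeq (h β : ℝ) (F : H → ℝ) (L : H →L[ℝ] H) (Xs : H) (X : ℕ → H) (s : ℕ → ℝ)
    (k : ℕ) : ℝ :=
  aSeq h β F L Xs X k
    + (s k / 2) * ⟪Gmap h β F L (k + 1) (X (k + 1)), Gmap h β F L k (X k)⟫

/-- `b̃_{k+1}` (indexed so that `btilSeq … k = b̃_{k+1}`). -/
def btilSeq (h β : ℝ) (F : H → ℝ) (L : H →L[ℝ] H) (X : ℕ → H) (k : ℕ) : ℝ :=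
  ‖Gmap h β F L k (X k)‖ ^ 2 + ‖Gmap h β F L (k + 1) (X (k + 1))‖ ^ 2

/-- `w_{k+1}` (indexed so that `wSeq … k = w_{k+1}`). -/
def wSeq (h β : ℝ) (F : H → ℝ) (L : H →L[ℝ] H) (X : ℕ → H) (k : ℕ) : ℝ :=
  ⟪Gmap h β F L (k + 1) (X (k + 1)), Gmap h β F L k (X k)⟫

/-- `r_{k+1}` (indexed so that `rSeq … k = r_{k+1}`). -/
def rSeq (h β : ℝ) (F : H → ℝ) (L : H →L[ℝ] H) (Xs : H) (X : ℕ → H) (k : ℕ) : ℝ :=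
  -‖((2 * thetaSeq (k + 1) * h) ^ (-β)) • gradient F Xs‖ ^ 2
    + 2 * ⟪((2 * thetaSeq (k + 1) * h) ^ (-β)) • gradient F Xs,
        ((2 * thetaSeq (k + 1) * h) ^ (-β)) • gradient F Xs
          - Gmap h β F L (k + 1) (X (k + 1))⟫

/-- `q_{k+1}` (indexed so that `qSeq … k = q_{k+1}`). -/
def qSeq (h β : ℝ) (F : H → ℝ) (L : H →L[ℝ] H) (Xs : H) (X : ℕ → H) (s : ℕ → ℝ)
    (k : ℕ) : ℝ :=
  aSeq h β F L Xs X k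
    - (s (k + 1) / 4) * ‖Gmap h β F L k (X k)‖ ^ 2
    - (s (k + 1) / 4) * ‖Gmap h β F L (k + 1) (X (k + 1))‖ ^ 2
    + (s k / 2) * ⟪Gmap h β F L (k + 1) (X (k + 1)), Gmap h β F L k (X k)⟫

/-!
Write `Ψ_k(Y) = (2θ_k h)^{-β} (F(Y) - F*) + ½⟨Y - X*, L̃(Y - X*)⟩`: a convex function whose
gradient `G_k` is `L̃_k`-Lipschitz and vanishes at `X*`. Since `∇F(X*) = 0` we have `r_{k+1} = 0`,
and the case bounds give `q_{k+1} ≥ 0`. Co-coercivity of `∇Ψ_{k+1}` at the minimiser `X*` gives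
`Ψ_{k+1}(X_{k+1}) + (s_{k+1}/4)‖G_{k+1}(X_{k+1})‖² ≤ ⟨G_{k+1}(X_{k+1}), X_{k+1} - X*⟩`, and the
extrapolation step expresses `θ_{k+1}(Z_{k+1} - X*)` through `X_{k+1} - X*`, `X_k - X_{k+1}` and
`G_k(X_k)`. After these substitutions `V_k - V_{k+1}` is `2A_k q_{k+1}` plus terms whose signs come
from `s_k ≤ s_{k+1}`, `A_{k+1} ≤ A_k + θ_{k+1}` and `θ_{k+1}² - θ_{k+1}/2 ≤ (A_{k+1} + A_k)/2`.
-/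

section GradientInequalities

variable {E : Type*} [NormedAddCommGroup E] [InnerProductSpace ℝ E] [CompleteSpace E]
  {φ : E → ℝ}

theorem Differentiable.hasDerivAt_comp_add_smul (hφ : Differentiable ℝ φ) (x v : E) (t : ℝ) :
    HasDerivAt (fun τ : ℝ => φ (x + τ • v)) ⟪gradient φ (x + t • v), v⟫ t := by
  have hline : HasDerivAt (fun τ : ℝ => x + τ • v) v t := by
    simpa using ((hasDerivAt_id t).smul_const v).const_add x
  have hcomp := (hφ _).hasGradientAt.hasFDerivAt.comp_hasDerivAt t hline
  simp only [InnerProductSpace.toDual_apply_apply] at hcomp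
  exact hcomp

theorem ConvexOn.add_inner_gradient_le (hconv : ConvexOn ℝ Set.univ φ)
    (hφ : Differentiable ℝ φ) (x y : E) : φ x + ⟪gradient φ x, y - x⟫ ≤ φ y := by
  have hline : ConvexOn ℝ Set.univ (fun τ : ℝ => φ (x + τ • (y - x))) := by
    simpa [Function.comp_def, AffineMap.lineMap_apply, add_comm] using
      hconv.comp_affineMap (AffineMap.lineMap x y)
  have hderiv : HasDerivAt (fun τ : ℝ => φ (x + τ • (y - x))) ⟪gradient φ x, y - x⟫ 0 := by
    simpa only [zero_smul, add_zero] using hφ.hasDerivAt_comp_add_smul x (y - x) 0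
  have hslope := hline.le_slope_of_hasDerivAt (Set.mem_univ 0) (Set.mem_univ 1) one_pos hderiv
  simp only [slope_def_field, one_smul, zero_smul, add_zero, add_sub_cancel, sub_zero,
    div_one] at hslope
  linarith

theorem Differentiable.le_add_inner_gradient_add_sq (hφ : Differentiable ℝ φ) {M : ℝ}
    (hlip : ∀ a b, ‖gradient φ a - gradient φ b‖ ≤ M * ‖a - b‖) (x y : E) :
    φ y ≤ φ x + ⟪gradient φ x, y - x⟫ + M / 2 * ‖y - x‖ ^ 2 := by
  set v := y - x
  let ψ : ℝ → ℝ := fun τ => φ (x + τ • v) - τ * ⟪gradient φ x, v⟫ - M / 2 * τ ^ 2 * ‖v‖ ^ 2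
  have hψ : ∀ t, HasDerivAt ψ (⟪gradient φ (x + t • v) - gradient φ x, v⟫ - M * t * ‖v‖ ^ 2) t :=
    fun t => by
      refine (((hφ.hasDerivAt_comp_add_smul x v t).sub
        ((hasDerivAt_id t).mul_const ⟪gradient φ x, v⟫)).sub
        (((hasDerivAt_pow 2 t).const_mul (M / 2)).mul_const (‖v‖ ^ 2))).congr_deriv ?_
      simp only [inner_sub_left]
      ring
  have hanti : AntitoneOn ψ (Set.Ici 0) := by
    refine antitoneOn_of_hasDerivWithinAt_nonpos (convex_Ici 0)
      (fun t _ => (hψ t).continuousAt.continuousWithinAt) (fun t _ => (hψ t).hasDerivWithinAt)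
      fun t ht => ?_
    rw [interior_Ici] at ht
    have hdiff : ‖gradient φ (x + t • v) - gradient φ x‖ ≤ M * t * ‖v‖ := by
      simpa [norm_smul, abs_of_pos (Set.mem_Ioi.mp ht), mul_assoc] using hlip (x + t • v) x
    nlinarith [real_inner_le_norm (gradient φ (x + t • v) - gradient φ x) v, norm_nonneg v]
  have h01 := hanti Set.self_mem_Ici (Set.mem_Ici.mpr zero_le_one) zero_le_one
  simp only [ψ, one_smul, zero_smul, add_zero, one_mul, zero_mul, one_pow, sub_zero,
    ne_eq, OfNat.ofNat_ne_zero, not_false_eq_true, zero_pow, mul_zero, mul_one, v,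
    add_sub_cancel] at h01
  linarith

-- Convexity at `x` and the descent lemma at `y`, both evaluated at `y - M⁻¹ (∇φ y - ∇φ x)`.
theorem ConvexOn.add_inner_gradient_add_sq_div_le (hconv : ConvexOn ℝ Set.univ φ)
    (hφ : Differentiable ℝ φ) {M : ℝ} (hM : 0 < M)
    (hlip : ∀ a b, ‖gradient φ a - gradient φ b‖ ≤ M * ‖a - b‖) (x y : E) :
    φ x + ⟪gradient φ x, y - x⟫ + ‖gradient φ x - gradient φ y‖ ^ 2 / (2 * M) ≤ φ y := by
  set g := gradient φ y - gradient φ x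
  have hdesc := hφ.le_add_inner_gradient_add_sq hlip y (y - M⁻¹ • g)
  have hconvx := hconv.add_inner_gradient_le hφ x (y - M⁻¹ • g)
  have hyx : y - M⁻¹ • g - x = (y - x) - M⁻¹ • g := by abel
  simp only [sub_sub_cancel_left, inner_neg_right, real_inner_smul_right, norm_neg, norm_smul,
    Real.norm_eq_abs, abs_inv, abs_of_pos hM, hyx, inner_sub_right] at hdesc hconvx
  have hgg : ⟪gradient φ y, g⟫ - ⟪gradient φ x, g⟫ = ‖g‖ ^ 2 := by
    rw [← inner_sub_left, real_inner_self_eq_norm_sq]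
  rw [norm_sub_rev, inner_sub_right]
  change _ + ‖g‖ ^ 2 / (2 * M) ≤ _
  have hM' : M / 2 * (M⁻¹ * ‖g‖) ^ 2 = ‖g‖ ^ 2 / (2 * M) := by field_simp
  have hM'' : M⁻¹ * ⟪gradient φ y, g⟫ - M⁻¹ * ⟪gradient φ x, g⟫
      = ‖g‖ ^ 2 / (2 * M) + ‖g‖ ^ 2 / (2 * M) := by
    rw [← mul_sub, hgg]; field_simp; ring
  linarith

theorem IsLocalMin.gradient_eq_zero {x : E} (hmin : IsLocalMin φ x) : gradient φ x = 0 := by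
  simp only [gradient, hmin.fderiv_eq_zero, map_zero]

end GradientInequalities

section QuadraticForm

variable {E : Type*} [NormedAddCommGroup E] [InnerProductSpace ℝ E] {T : E →L[ℝ] E}

theorem hasGradientAt_half_inner_self_apply [CompleteSpace E]
    (hT : ∀ x y, ⟪T x, y⟫ = ⟪x, T y⟫) (z : E) :
    HasGradientAt (fun y => (1 / 2) * ⟪y, T y⟫) (T z) z := by
  rw [hasGradientAt_iff_hasFDerivAt]
  refine (((hasFDerivAt_id z).inner ℝ (T.hasFDerivAt (x := z))).const_mul
    (1 / 2 : ℝ)).congr_fderiv ?_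
  ext v
  simp only [smul_apply, ContinuousLinearMap.comp_apply, ContinuousLinearMap.prod_apply,
    ContinuousLinearMap.id_apply, fderivInnerCLM_apply, smul_eq_mul, id_eq,
    InnerProductSpace.toDual_apply_apply]
  rw [← hT z v, real_inner_comm v]
  ring

theorem convexOn_half_inner_self_apply (hT : ∀ x y, ⟪T x, y⟫ = ⟪x, T y⟫)
    (hpos : ∀ x, 0 ≤ ⟪x, T x⟫) : ConvexOn ℝ Set.univ (fun y => (1 / 2) * ⟪y, T y⟫) := by
  refine ⟨convex_univ, fun x _ y _ a b ha hb hab => ?_⟩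
  have hyx : ⟪y, T x⟫ = ⟪x, T y⟫ := by rw [← hT, real_inner_comm]
  have hgap : a • ((1 / 2) * ⟪x, T x⟫) + b • ((1 / 2) * ⟪y, T y⟫)
      - (1 / 2) * ⟪a • x + b • y, T (a • x + b • y)⟫ = (a * b / 2) * ⟪x - y, T (x - y)⟫ := by
    obtain rfl : b = 1 - a := by linarith
    simp only [map_add, map_sub, map_smul, inner_add_left, inner_add_right, inner_sub_left,
      inner_sub_right, real_inner_smul_left, real_inner_smul_right, smul_eq_mul, hyx]
    ring
  nlinarith [mul_nonneg (mul_nonneg ha hb) (hpos (x - y))]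

theorem inner_sub_apply_sub_of_apply_eq_zero (hT : ∀ x y, ⟪T x, y⟫ = ⟪x, T y⟫) {a : E}
    (ha : T a = 0) (y : E) : ⟪y - a, T (y - a)⟫ = ⟪y, T y⟫ := by
  rw [map_sub, ha, sub_zero, inner_sub_left, ← hT a, ha, inner_zero_left, sub_zero]

end QuadraticForm

section Sequences

theorem two_mul_thetaSeq (k : ℕ) : 2 * thetaSeq k = k := by
  simp only [thetaSeq]; ring

theorem thetaSeq_succ_pos (k : ℕ) : 0 < thetaSeq (k + 1) := by
  simp only [thetaSeq]; positivity

theorem thetaSeq_sq_lt_succ_sq (k : ℕ) : thetaSeq k ^ 2 < thetaSeq (k + 1) ^ 2 := by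
  simp only [thetaSeq]; push_cast; nlinarith [(Nat.cast_nonneg k : (0 : ℝ) ≤ k)]

theorem ASeq_eq (k : ℕ) : ASeq k = (k : ℝ) ^ 2 * (k + 1) / (2 * (2 * k + 1)) := by
  have hd : thetaSeq (k + 1) ^ 2 - thetaSeq k ^ 2 = (2 * k + 1) / 4 := by
    simp only [thetaSeq]; push_cast; ring
  rw [ASeq, cSeq, hd, thetaSeq, thetaSeq]
  push_cast
  field_simp
  ring

theorem ASeq_nonneg (k : ℕ) : 0 ≤ ASeq k := by
  rw [ASeq_eq]; positivity

theorem ASeq_succ_le (k : ℕ) : ASeq (k + 1) ≤ ASeq k + thetaSeq (k + 1) := by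
  have hgap : ASeq k + thetaSeq (k + 1) - ASeq (k + 1)
      = ((k : ℝ) + 1) ^ 2 / (2 * (2 * k + 1) * (2 * k + 3)) := by
    rw [ASeq_eq, ASeq_eq, thetaSeq]
    push_cast
    field_simp
    ring
  have : (0 : ℝ) ≤ ((k : ℝ) + 1) ^ 2 / (2 * (2 * k + 1) * (2 * k + 3)) := by positivity
  linarith

theorem thetaSeq_sq_sub_le (k : ℕ) :
    thetaSeq (k + 1) ^ 2 - thetaSeq (k + 1) / 2 ≤ (ASeq (k + 1) + ASeq k) / 2 := by
  have hgap : (ASeq (k + 1) + ASeq k) / 2 - (thetaSeq (k + 1) ^ 2 - thetaSeq (k + 1) / 2)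
      = ((k : ℝ) + 1) ^ 3 / (2 * (2 * k + 1) * (2 * k + 3)) := by
    rw [ASeq_eq, ASeq_eq, thetaSeq]
    push_cast
    field_simp
    ring
  have : (0 : ℝ) ≤ ((k : ℝ) + 1) ^ 3 / (2 * (2 * k + 1) * (2 * k + 3)) := by positivity
  linarith

theorem thetaSeq_succ_smul_sub_eq {E : Type*} [AddCommGroup E] [Module ℝ E] (k : ℕ)
    {x x' z g xs : E} {s : ℝ}
    (hx' : x' = (thetaSeq k ^ 2 / thetaSeq (k + 1) ^ 2) • (x - (s / 2) • g)
      + (1 - thetaSeq k ^ 2 / thetaSeq (k + 1) ^ 2) • z) :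
    thetaSeq (k + 1) • (z - xs)
      = thetaSeq (k + 1) • (x' - xs) - ASeq k • (x - x') + (ASeq k * s / 2) • g := by
  have hθ := (thetaSeq_succ_pos k).ne'
  have hd := (sub_pos.mpr (thetaSeq_sq_lt_succ_sq k)).ne'
  subst hx'
  simp only [ASeq, cSeq]
  match_scalars <;> field_simp <;> ring

theorem thetaSeq_succ_mul_inner_sub_eq {E : Type*} [NormedAddCommGroup E]
    [InnerProductSpace ℝ E] (k : ℕ) {x x' z g xs : E} {s : ℝ}
    (hx' : x' = (thetaSeq k ^ 2 / thetaSeq (k + 1) ^ 2) • (x - (s / 2) • g)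
      + (1 - thetaSeq k ^ 2 / thetaSeq (k + 1) ^ 2) • z) (y : E) :
    thetaSeq (k + 1) * ⟪y, z - xs⟫
      = thetaSeq (k + 1) * ⟪y, x' - xs⟫ - ASeq k * ⟪y, x - x'⟫ + ASeq k * s / 2 * ⟪y, g⟫ := by
  simpa only [inner_add_right, inner_sub_right, real_inner_smul_right] using
    congrArg (inner ℝ y) (thetaSeq_succ_smul_sub_eq k (xs := xs) hx')

end Sequences

section Potential

variable {E : Type*} [NormedAddCommGroup E] [InnerProductSpace ℝ E]

/-- The energy `Ψ_k` inside `V_k` and `a_{k+1}`; its gradient is `G_k`. -/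
def potential (h β : ℝ) (F : E → ℝ) (L : E →L[ℝ] E) (Xs : E) (k : ℕ) (Y : E) : ℝ :=
  (2 * thetaSeq k * h) ^ (-β) * (F Y - F Xs) + (1 / 2) * ⟪Y - Xs, L (Y - Xs)⟫

variable {h β : ℝ} {F : E → ℝ} {L : E →L[ℝ] E} {Xs : E}

theorem rpow_thetaSeq_nonneg (hh : 0 ≤ h) (k : ℕ) : 0 ≤ (2 * thetaSeq k * h) ^ (-β) := by
  rw [two_mul_thetaSeq]; positivity

theorem potential_eq (hsym : ∀ x y, ⟪L x, y⟫ = ⟪x, L y⟫) (hXs : L Xs = 0) (k : ℕ) :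
    potential h β F L Xs k
      = fun Y => (2 * thetaSeq k * h) ^ (-β) * (F Y - F Xs) + (1 / 2) * ⟪Y, L Y⟫ := by
  funext Y
  rw [potential, inner_sub_apply_sub_of_apply_eq_zero hsym hXs]

theorem potential_nonneg (hh : 0 ≤ h) (hpsd : ∀ x, 0 ≤ ⟪x, L x⟫) (hmin : ∀ Y, F Xs ≤ F Y)
    (k : ℕ) (Y : E) : 0 ≤ potential h β F L Xs k Y :=
  add_nonneg (mul_nonneg (rpow_thetaSeq_nonneg hh k) (sub_nonneg.mpr (hmin Y)))
    (mul_nonneg (by norm_num) (hpsd _))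

theorem convexOn_potential (hh : 0 ≤ h) (hconv : ConvexOn ℝ Set.univ F)
    (hsym : ∀ x y, ⟪L x, y⟫ = ⟪x, L y⟫) (hpsd : ∀ x, 0 ≤ ⟪x, L x⟫) (hXs : L Xs = 0) (k : ℕ) :
    ConvexOn ℝ Set.univ (potential h β F L Xs k) := by
  rw [potential_eq hsym hXs]
  refine (((hconv.add_const (-F Xs)).smul (rpow_thetaSeq_nonneg (β := β) hh k)).add
    (convexOn_half_inner_self_apply hsym hpsd)).congr fun Y _ => ?_
  simp only [Pi.add_apply, smul_eq_mul, sub_eq_add_neg]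

end Potential

section GradientStep

variable {h β : ℝ} {F : H → ℝ} {L : H →L[ℝ] H} {Xs : H}

theorem hasGradientAt_potential (hF : Differentiable ℝ F) (hsym : ∀ x y, ⟪L x, y⟫ = ⟪x, L y⟫)
    (hXs : L Xs = 0) (k : ℕ) (Y : H) :
    HasGradientAt (potential h β F L Xs k) (Gmap h β F L k Y) Y := by
  rw [potential_eq hsym hXs, hasGradientAt_iff_hasFDerivAt]
  refine ((((hF Y).hasGradientAt.hasFDerivAt.sub_const (F Xs)).const_mul _).add
    (hasGradientAt_half_inner_self_apply hsym Y).hasFDerivAt).congr_fderiv ?_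
  simp only [Gmap, map_add, map_smul]

theorem gradient_potential (hF : Differentiable ℝ F) (hsym : ∀ x y, ⟪L x, y⟫ = ⟪x, L y⟫)
    (hXs : L Xs = 0) (k : ℕ) : gradient (potential h β F L Xs k) = Gmap h β F L k :=
  gradient_eq (hasGradientAt_potential hF hsym hXs k)

theorem norm_Gmap_sub_le {Lf lambar : ℝ} (hh : 0 ≤ h)
    (hlip : ∀ x y, ‖gradient F x - gradient F y‖ ≤ Lf * ‖x - y‖) (hlam : ‖L‖ ≤ lambar)
    (k : ℕ) (a b : H) :
    ‖Gmap h β F L k a - Gmap h β F L k b‖ ≤ LSmooth lambar Lf h β k * ‖a - b‖ := by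
  set c := (2 * thetaSeq k * h) ^ (-β)
  have hc : 0 ≤ c := rpow_thetaSeq_nonneg hh k
  have hsplit : Gmap h β F L k a - Gmap h β F L k b
      = c • (gradient F a - gradient F b) + L (a - b) := by
    simp only [Gmap, map_sub, smul_sub]; abel
  have hLS : c * Lf + lambar ≤ LSmooth lambar Lf h β k := by
    rw [LSmooth, ← two_mul_thetaSeq]
    change c * Lf + lambar ≤ 2 * max lambar (c * Lf)
    linarith [le_max_left lambar (c * Lf), le_max_right lambar (c * Lf)]
  calc ‖Gmap h β F L k a - Gmap h β F L k b‖
      ≤ c * ‖gradient F a - gradient F b‖ + ‖L (a - b)‖ := by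
        rw [hsplit]
        refine (norm_add_le _ _).trans ?_
        rw [norm_smul, Real.norm_of_nonneg hc]
    _ ≤ c * (Lf * ‖a - b‖) + lambar * ‖a - b‖ := by
        gcongr
        · exact hlip a b
        · exact (L.le_opNorm _).trans (by gcongr)
    _ = (c * Lf + lambar) * ‖a - b‖ := by ring
    _ ≤ LSmooth lambar Lf h β k * ‖a - b‖ := by gcongr

end GradientStep

-- `V_{k+1} ≤ V_k` in scalar form: `A, A', θ, s, s'` are `A_k, A_{k+1}, θ_{k+1}, s_k, s_{k+1}`;
-- `Ψ, Ψ', n, n'` are `Ψ_k(X_k), Ψ_{k+1}(X_{k+1}), ‖G_k(X_k)‖², ‖G_{k+1}(X_{k+1})‖²`; with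
-- `g = G_{k+1}(X_{k+1})`, `d, p', w, I` are `⟨g, X_k - X_{k+1}⟩, ⟨g, X_{k+1} - X*⟩, ⟨g, G_k(X_k)⟩`,
-- `⟨g, Z_{k+1} - X*⟩`; and `U = ‖Z_{k+1} - X*‖²`.
theorem lyapunov_scalar_ineq {A A' θ s s' Ψ Ψ' n n' d p' w U I : ℝ}
    (hA : 0 ≤ A) (hθ : 0 < θ) (hs : 0 < s) (hss' : s ≤ s')
    (hA' : A' ≤ A + θ) (hθA : θ ^ 2 - θ / 2 ≤ (A' + A) / 2)
    (hq : 0 ≤ Ψ - Ψ' - d - s' / 4 * n - s' / 4 * n' + s / 2 * w)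
    (hΨ' : 0 ≤ Ψ') (hp' : Ψ' + s' / 4 * n' ≤ p') (hn : 0 ≤ n) (hn' : 0 ≤ n') (hU : 0 ≤ U)
    (hI : θ * I = θ * p' - A * d + A * s / 2 * w) :
    2 * A' * (Ψ' - s' / 4 * n') + 1 / s' * U - 2 * θ * I + s' * θ ^ 2 * n'
      ≤ 2 * A * (Ψ - s / 4 * n) + 1 / s * U := by
  have hs' : 0 < s' := hs.trans_le hss'
  have h1 := mul_nonneg (mul_nonneg zero_le_two hA) hq
  have h2 := mul_nonneg (sub_nonneg.mpr hA') hΨ'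
  have h3 := mul_nonneg hθ.le (sub_nonneg.mpr hp')
  have h4 := mul_nonneg (mul_nonneg hs'.le (sub_nonneg.mpr hθA)) hn'
  have h5 := mul_nonneg (mul_nonneg hA (sub_nonneg.mpr hss')) hn
  have h6 := mul_nonneg (sub_nonneg.mpr (one_div_le_one_div_of_le hs hss')) hU
  linear_combination h1 + 2 * h2 + 2 * h3 + h4 + h5 / 2 + h6 - 2 * hI

section LyapunovStep

variable {h β : ℝ} {F : H → ℝ} {L : H →L[ℝ] H} {Xs : H}

theorem Gmap_eq_zero_of_gradient_eq_zero (hgrad : gradient F Xs = 0) (hXs : L Xs = 0)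
    (k : ℕ) : Gmap h β F L k Xs = 0 := by
  simp only [Gmap, hgrad, hXs, smul_zero, add_zero]

theorem potential_add_le_inner_Gmap {Lf lambar s : ℝ} (hh : 0 ≤ h) (hF : Differentiable ℝ F)
    (hconv : ConvexOn ℝ Set.univ F)
    (hlip : ∀ x y, ‖gradient F x - gradient F y‖ ≤ Lf * ‖x - y‖)
    (hsym : ∀ x y, ⟪L x, y⟫ = ⟪x, L y⟫) (hpsd : ∀ x, 0 ≤ ⟪x, L x⟫) (hlam : ‖L‖ ≤ lambar)
    (hXs : L Xs = 0) (hgrad : gradient F Xs = 0) {k : ℕ} (hs : 0 < s)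
    (hstep : s ≤ 2 / LSmooth lambar Lf h β k) (Y : H) :
    potential h β F L Xs k Y + s / 4 * ‖Gmap h β F L k Y‖ ^ 2
      ≤ ⟪Gmap h β F L k Y, Y - Xs⟫ := by
  set M := LSmooth lambar Lf h β k
  have hM : 0 < M := by
    by_contra! hM
    linarith [div_nonpos_of_nonneg_of_nonpos zero_le_two hM]
  have hsM : s / 4 * ‖Gmap h β F L k Y‖ ^ 2 ≤ ‖Gmap h β F L k Y‖ ^ 2 / (2 * M) := by
    rw [mul_comm, ← mul_div_assoc, div_le_div_iff₀ (by norm_num) (by positivity)]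
    have := (le_div_iff₀ hM).mp hstep
    nlinarith [sq_nonneg ‖Gmap h β F L k Y‖]
  have hcoc := (convexOn_potential hh hconv hsym hpsd hXs k).add_inner_gradient_add_sq_div_le
    (fun Y => (hasGradientAt_potential hF hsym hXs k Y).differentiableAt) hM
    (by rw [gradient_potential hF hsym hXs]; exact norm_Gmap_sub_le hh hlip hlam k) Y Xs
  have hΨXs : potential h β F L Xs k Xs = 0 := by simp [potential]
  rw [gradient_potential hF hsym hXs, Gmap_eq_zero_of_gradient_eq_zero hgrad hXs, sub_zero,
    hΨXs, ← neg_sub Y, inner_neg_right] at hcoc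
  linarith

theorem aSeq_eq (X : ℕ → H) (k : ℕ) :
    aSeq h β F L Xs X k = potential h β F L Xs k (X k) - potential h β F L Xs (k + 1) (X (k + 1))
      - ⟪Gmap h β F L (k + 1) (X (k + 1)), X k - X (k + 1)⟫ := by
  simp only [aSeq, potential]; ring

theorem rSeq_eq_zero (hgrad : gradient F Xs = 0) (X : ℕ → H) (k : ℕ) :
    rSeq h β F L Xs X k = 0 := by
  simp [rSeq, hgrad]

theorem qSeq_nonneg {X : ℕ → H} {s : ℕ → ℝ} {k : ℕ} (hmono : s k ≤ s (k + 1))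
    (hr : 0 ≤ rSeq h β F L Xs X k)
    (hcase₁ : wSeq h β F L X k ≤ 0 → 0 ≤ rSeq h β F L Xs X k →
      s (k + 1) * bSeq h β F L X k ≤ 4 * aSeq h β F L Xs X k)
    (hcase₃ : 0 < wSeq h β F L X k → 0 ≤ rSeq h β F L Xs X k →
      s (k + 1) * btilSeq h β F L X k ≤ 4 * atilSeq h β F L Xs X s k) :
    0 ≤ qSeq h β F L Xs X s k := by
  have hb : bSeq h β F L X k = btilSeq h β F L X k - 2 * wSeq h β F L X k := by
    rw [bSeq, btilSeq, wSeq, norm_sub_sq_real, real_inner_comm]; ring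
  simp only [qSeq]
  rcases le_or_gt (wSeq h β F L X k) 0 with hw | hw
  · have hc := hcase₁ hw hr
    rw [hb] at hc
    simp only [btilSeq, wSeq] at hc hw
    nlinarith [mul_nonneg (sub_nonneg.mpr hmono) (neg_nonneg.mpr hw)]
  · have hc := hcase₃ hw hr
    simp only [btilSeq, atilSeq] at hc
    linarith

theorem VSeq_succ_eq {X Z : ℕ → H} {s : ℕ → ℝ} {k : ℕ} (hs : s (k + 1) ≠ 0)
    (hZ : Z (k + 1 + 1)
      = Z (k + 1) - (s (k + 1) * thetaSeq (k + 1)) • Gmap h β F L (k + 1) (X (k + 1))) :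
    VSeq h β F L Xs X Z s (k + 1)
      = 2 * ASeq (k + 1) * (potential h β F L Xs (k + 1) (X (k + 1))
          - s (k + 1) / 4 * ‖Gmap h β F L (k + 1) (X (k + 1))‖ ^ 2)
        + 1 / s (k + 1) * ‖Z (k + 1) - Xs‖ ^ 2
        - 2 * thetaSeq (k + 1) * ⟪Gmap h β F L (k + 1) (X (k + 1)), Z (k + 1) - Xs⟫
        + s (k + 1) * thetaSeq (k + 1) ^ 2 * ‖Gmap h β F L (k + 1) (X (k + 1))‖ ^ 2 := by
  have hZs : Z (k + 1 + 1) - Xs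
      = (Z (k + 1) - Xs) - (s (k + 1) * thetaSeq (k + 1)) • Gmap h β F L (k + 1) (X (k + 1)) := by
    rw [hZ]; abel
  rw [VSeq, hZs, norm_sub_sq_real, real_inner_smul_right, norm_smul,
    real_inner_comm _ (Z (k + 1) - Xs), Real.norm_eq_abs, mul_pow, sq_abs, potential]
  field_simp
  ring

end LyapunovStep

theorem lyapunov_decrement
    (F : H → ℝ) (hF : Differentiable ℝ F) (hconv : ConvexOn ℝ Set.univ F)
    (Lf : ℝ)
    (hlip : ∀ x y : H, ‖gradient F x - gradient F y‖ ≤ Lf * ‖x - y‖)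
    (L : H →L[ℝ] H) (hsym : ∀ x y : H, ⟪L x, y⟫ = ⟪x, L y⟫)
    (hpsd : ∀ x : H, 0 ≤ ⟪x, L x⟫)
    (lambar : ℝ) (hlam : ‖L‖ = lambar)
    (Xs : H) (hXs : L Xs = 0) (hmin : ∀ Y : H, F Xs ≤ F Y)
    (h β : ℝ) (hh : 0 < h)
    (X Xp Z : ℕ → H) (s : ℕ → ℝ)
    (hspos : ∀ k, 1 ≤ k → 0 < s k)
    (hXp : ∀ k, 1 ≤ k → Xp k = X k - (s k / 2) • Gmap h β F L k (X k))
    (hZupd : ∀ k, 1 ≤ k → Z (k + 1) = Z k - (s k * thetaSeq k) • Gmap h β F L k (X k))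
    (hXupd : ∀ k, 1 ≤ k → X (k + 1) = (thetaSeq k ^ 2 / thetaSeq (k + 1) ^ 2) • Xp k
        + (1 - thetaSeq k ^ 2 / thetaSeq (k + 1) ^ 2) • Z (k + 1))
    (k : ℕ) (hk : 1 ≤ k)
    (hmono : s k ≤ s (k + 1))
    (hstep : s (k + 1) ≤ 2 / LSmooth lambar Lf h β (k + 1))
    (hcase₁ : wSeq h β F L X k ≤ 0 → 0 ≤ rSeq h β F L Xs X k →
      s (k + 1) * bSeq h β F L X k ≤ 4 * aSeq h β F L Xs X k)
    (hcase₃ : 0 < wSeq h β F L X k → 0 ≤ rSeq h β F L Xs X k →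
      s (k + 1) * btilSeq h β F L X k ≤ 4 * atilSeq h β F L Xs X s k)
    :
    VSeq h β F L Xs X Z s (k + 1) ≤ VSeq h β F L Xs X Z s k := by
  have hs := hspos k hk
  have hs' := hspos (k + 1) (by omega)
  have hgrad : gradient F Xs = 0 :=
    IsLocalMin.gradient_eq_zero (Filter.Eventually.of_forall hmin)
  have hq := qSeq_nonneg hmono (rSeq_eq_zero hgrad X k).ge hcase₁ hcase₃
  rw [qSeq, aSeq_eq] at hq
  have hcoc := potential_add_le_inner_Gmap hh.le hF hconv hlip hsym hpsd hlam.le hXs hgrad hs'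
    hstep (X (k + 1))
  have hI := thetaSeq_succ_mul_inner_sub_eq k (xs := Xs)
    (hXp k hk ▸ hXupd k hk) (Gmap h β F L (k + 1) (X (k + 1)))
  rw [VSeq_succ_eq hs'.ne' (hZupd (k + 1) (by omega))]
  exact lyapunov_scalar_ineq (ASeq_nonneg k) (thetaSeq_succ_pos k) hs hmono (ASeq_succ_le k)
    (thetaSeq_sq_sub_le k) hq (potential_nonneg hh.le hpsd hmin _ _) hcoc (sq_nonneg _)
    (sq_nonneg _) (sq_nonneg _) hI
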